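/- Let Γₙ be the graph on {v₀,…,vₙ, w₀,…,wₙ} with edges: all pairs among the vⱼ, and wᵢ adjacent to vⱼ iff j ≠ i. Define z_r(Γₙ) as the maximum of Σ_{i=1}^r |Cᵢ| over cliques C₁,…,C_r of Γₙ with ∩_{i=1}^r Cᵢ = ∅. Then for all r > n, z_r(Γₙ) = r(n+1). -/

import Mathlib

/-!
Two distinct vertices with the same subscript (`vⱼ, wⱼ`, or two `w`'s) are never adjacent, so the
subscript map is injective on every clique and cliques have at most `n + 1` vertices. Conversely the
`n + 1` cliques `{w_k} ∪ {vⱼ | j ≠ k}` have size `n + 1` and empty intersection: `vⱼ` misses the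
`j`-th one and `wᵢ` lies only in the `i`-th. Since `r > n`, we can list all of them among `r` cliques.
-/

/-- The vertex set of the graph `Γₙ`: vertices `v₀, …, vₙ` (left) and `w₀, …, wₙ` (right). -/
def GammaVert (n : ℕ) : Type := Fin (n + 1) ⊕ Fin (n + 1)

/-- The graph `Γₙ`: all pairs among the `vⱼ` are adjacent, and `wᵢ` is adjacent to `vⱼ`
iff `i ≠ j`; no two `w`'s are adjacent. -/
def Gamma (n : ℕ) : SimpleGraph (GammaVert n) :=
  SimpleGraph.fromRel fun a b =>
    match a, b with
    | Sum.inl _, Sum.inl _ => True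
    | Sum.inl j, Sum.inr i => i ≠ j
    | Sum.inr i, Sum.inl j => i ≠ j
    | Sum.inr _, Sum.inr _ => False

instance (n : ℕ) : Fintype (GammaVert n) := by unfold GammaVert; infer_instance
instance (n : ℕ) : DecidableEq (GammaVert n) := by unfold GammaVert; infer_instance

/-- The set of total sizes `∑ i, |Cᵢ|` over all `r`-tuples of cliques `C₁, …, C_r` of `Γₙ`
with empty common intersection. -/
def cliqueSums (n r : ℕ) : Set ℕ :=
  {s | ∃ C : Fin r → Finset (GammaVert n),
    (∀ i, (Gamma n).IsClique (C i : Set (GammaVert n))) ∧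
    Finset.univ.inf C = ∅ ∧ s = ∑ i, (C i).card}

namespace Gamma

variable {n : ℕ}

lemma adj_inl_inl (j j' : Fin (n + 1)) :
    (Gamma n).Adj (Sum.inl j) (Sum.inl j') ↔ j ≠ j' :=
  (SimpleGraph.fromRel_adj _ _ _).trans <| by simp [GammaVert]

lemma adj_inl_inr (j i : Fin (n + 1)) :
    (Gamma n).Adj (Sum.inl j) (Sum.inr i) ↔ i ≠ j :=
  (SimpleGraph.fromRel_adj _ _ _).trans <| by simp [GammaVert]

lemma not_adj_inr_inr (i i' : Fin (n + 1)) :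
    ¬ (Gamma n).Adj (Sum.inr i) (Sum.inr i') :=
  fun h => by simpa using ((SimpleGraph.fromRel_adj _ _ _).1 h).2

def index : GammaVert n → Fin (n + 1) := Sum.elim id id

lemma index_ne_of_adj {x y : GammaVert n} (h : (Gamma n).Adj x y) : index x ≠ index y := by
  rcases x with j | i <;> rcases y with j' | i'
  · exact (adj_inl_inl j j').1 h
  · exact ((adj_inl_inr j i').1 h).symm
  · exact (adj_inl_inr j' i).1 h.symm
  · exact absurd h (not_adj_inr_inr i i')

lemma card_le_of_isClique {K : Finset (GammaVert n)}
    (hK : (Gamma n).IsClique (K : Set (GammaVert n))) : K.card ≤ n + 1 := by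
  have hinj : Set.InjOn index (K : Set (GammaVert n)) := fun x hx y hy hxy =>
    by_contra fun hne => index_ne_of_adj (hK hx hy hne) hxy
  simpa using
    Finset.card_le_card_of_injOn (t := Finset.univ) index (fun _ _ => Finset.mem_univ _) hinj

def starVert (k j : Fin (n + 1)) : GammaVert n := if j = k then Sum.inr k else Sum.inl j

lemma index_starVert (k j : Fin (n + 1)) : index (starVert k j) = j := by
  by_cases h : j = k <;> simp [starVert, index, h]

/-- The clique `{w_k} ∪ {vⱼ | j ≠ k}`. -/
def star (k : Fin (n + 1)) : Finset (GammaVert n) := Finset.univ.image (starVert k)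

lemma card_star (k : Fin (n + 1)) : (star k).card = n + 1 := by
  rw [star, Finset.card_image_of_injective _ (Function.LeftInverse.injective (index_starVert k)),
    Finset.card_univ, Fintype.card_fin]

lemma isClique_star (k : Fin (n + 1)) : (Gamma n).IsClique (star k : Set (GammaVert n)) := by
  rintro _ hx _ hy hne
  obtain ⟨j, -, rfl⟩ := Finset.mem_image.1 hx
  obtain ⟨j', -, rfl⟩ := Finset.mem_image.1 hy
  have hjj' : j ≠ j' := fun h => hne (h ▸ rfl)
  by_cases hj : j = k <;> by_cases hj' : j' = k <;> simp only [starVert, hj, hj']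
  · exact absurd (hj.trans hj'.symm) hjj'
  · exact ((adj_inl_inr j' k).2 (hj ▸ hjj')).symm
  · exact (adj_inl_inr j k).2 (hj' ▸ hjj'.symm)
  · exact (adj_inl_inl j j').2 hjj'

lemma mem_star {k : Fin (n + 1)} {x : GammaVert n} : x ∈ star k ↔ starVert k (index x) = x := by
  refine ⟨fun hx => ?_, fun hx => Finset.mem_image.2 ⟨_, Finset.mem_univ _, hx⟩⟩
  obtain ⟨j, -, rfl⟩ := Finset.mem_image.1 hx
  rw [index_starVert]

lemma inf_star_eq_empty (hn : 1 ≤ n) : Finset.univ.inf (star (n := n)) = ∅ := by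
  refine Finset.eq_empty_of_forall_notMem fun x hx => ?_
  have hmem : ∀ k, starVert k (index x) = x := fun k =>
    mem_star.1 (Finset.mem_inf.1 hx k (Finset.mem_univ k))
  rcases x with j | i
  · simpa [starVert, index] using hmem j
  · have : Nontrivial (Fin (n + 1)) := Fin.nontrivial_iff_two_le.2 (by omega)
    obtain ⟨k, hk⟩ := exists_ne i
    simpa [starVert, index, hk.symm] using hmem k

end Gamma

/-- For `r > n`, the maximum `z_r(Γₙ)` of total sizes of `r` cliques with empty
common intersection equals `r(n+1)`. -/
theorem stmt_4 (n r : ℕ) (hn : 2 ≤ n) (hr : n < r) :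
    IsGreatest (cliqueSums n r) (r * (n + 1)) := by
  constructor
  · have hsurj : Function.Surjective fun i : Fin r => Fin.ofNat (n + 1) i := fun k =>
      ⟨⟨k, by omega⟩, Fin.ofNat_val_eq_self k⟩
    refine ⟨fun i => Gamma.star (Fin.ofNat (n + 1) i), fun i => Gamma.isClique_star _, ?_, ?_⟩
    · rw [← Function.comp_def Gamma.star, ← Finset.inf_image,
        Finset.image_univ_of_surjective hsurj, Gamma.inf_star_eq_empty (by omega)]
    · simp [Gamma.card_star]
  · rintro _ ⟨C, hC, -, rfl⟩
    calc ∑ i, (C i).card ≤ ∑ _i : Fin r, (n + 1) :=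
          Finset.sum_le_sum fun i _ => Gamma.card_le_of_isClique (hC i)
      _ = r * (n + 1) := by simp
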